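/- arXiv:1202.5760 — 3 statements merged into one kernel-verified Lean document; each statement's English description precedes it below -/
import Mathlib

section
/- Let X be an affine T-variety and χ₁, χ₂ ∈ Σ. If the GIT-cone σ_{χ₁} contains the GIT-cone σ_{χ₂}, then the set of semistable points satisfies X^{ss}_{χ₁} ⊆ X^{ss}_{χ₂}. -/
/-!
STATEMENT 5: Let `X` be an affine `T`-variety and `χ₁, χ₂ ∈ Σ`.  If the GIT-cone `σ_{χ₁}`
contains the GIT-cone `σ_{χ₂}`, then `X^{ss}_{χ₁} ⊆ X^{ss}_{χ₂}`.

Model: `A = k[X]` graded by `𝔛(T) = ℤⁿ`, points are `k`-algebra homomorphisms `A →ₐ[k] k`.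
`X^{ss}_χ` is the set of points at which some semi-invariant of weight `rχ` (`r > 0`) does
not vanish; the orbit cone `w_x ⊆ ℚⁿ` is the pointed cone generated by the weights of
semi-invariants not vanishing at `x`; `σ_χ = ⋂_{x : χ ∈ w_x} w_x`.
-/

def weightSet {k A : Type*} [Field k] [CommRing A] [Algebra k A] {n : ℕ}
    (𝒜 : (Fin n → ℤ) → Submodule k A) (x : A →ₐ[k] k) : Set (Fin n → ℤ) :=
  {χ | ∃ f ∈ 𝒜 χ, x f ≠ 0}

def intToRat {n : ℕ} (χ : Fin n → ℤ) : Fin n → ℚ := fun i => (χ i : ℚ)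

def orbitCone {k A : Type*} [Field k] [CommRing A] [Algebra k A] {n : ℕ}
    (𝒜 : (Fin n → ℤ) → Submodule k A) (x : A →ₐ[k] k) : PointedCone ℚ (Fin n → ℚ) :=
  Submodule.span {c : ℚ // 0 ≤ c} (intToRat '' weightSet 𝒜 x)

/-- The GIT-cone of `χ`: the intersection of all orbit cones containing `χ`. -/
def gitCone {k A : Type*} [Field k] [CommRing A] [Algebra k A] {n : ℕ}
    (𝒜 : (Fin n → ℤ) → Submodule k A) (χ : Fin n → ℤ) : Set (Fin n → ℚ) :=
  ⋂ (x : A →ₐ[k] k) (_ : intToRat χ ∈ orbitCone 𝒜 x), (orbitCone 𝒜 x : Set (Fin n → ℚ))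

def IsSemistable {k A : Type*} [Field k] [CommRing A] [Algebra k A] {n : ℕ}
    (𝒜 : (Fin n → ℤ) → Submodule k A) (χ : Fin n → ℤ) (x : A →ₐ[k] k) : Prop :=
  ∃ r : ℕ, 0 < r ∧ ∃ f ∈ 𝒜 (r • χ), x f ≠ 0

/-- If `x` is `χ`-semistable then `χ` lies in the orbit cone of `x`. -/
lemma mem_orbitCone_of_isSemistable {k A : Type*} [Field k] [CommRing A] [Algebra k A] {n : ℕ}
    (𝒜 : (Fin n → ℤ) → Submodule k A) {χ : Fin n → ℤ} {x : A →ₐ[k] k}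
    (h : IsSemistable 𝒜 χ x) : intToRat χ ∈ orbitCone 𝒜 x := by
  obtain ⟨r, hr, f, hf, hxf⟩ := h
  have hmem : intToRat (r • χ) ∈ orbitCone 𝒜 x :=
    Submodule.subset_span ⟨r • χ, ⟨f, hf, hxf⟩, rfl⟩
  have key : ((⟨((r : ℚ))⁻¹, by positivity⟩ : {c : ℚ // 0 ≤ c}) • intToRat (r • χ))
      = intToRat χ := by
    funext i
    have hr' : (r : ℚ) ≠ 0 := by exact_mod_cast hr.ne'
    simp only [Nonneg.mk_smul, intToRat, Pi.smul_apply, Pi.smul_apply, smul_eq_mul]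
    push_cast
    field_simp
    simp [nsmul_eq_mul]
  rw [← key]
  exact Submodule.smul_mem _ _ hmem

/-- If `χ` lies in the orbit cone of `x`, then `x` is `χ`-semistable. -/
lemma isSemistable_of_mem_orbitCone {k A : Type*} [Field k] [CommRing A] [Algebra k A] {n : ℕ}
    (𝒜 : (Fin n → ℤ) → Submodule k A) [GradedAlgebra 𝒜] {χ : Fin n → ℤ} {x : A →ₐ[k] k}
    (h : intToRat χ ∈ orbitCone 𝒜 x) : IsSemistable 𝒜 χ x := by
  rw [orbitCone, Submodule.mem_span_set'] at h
  obtain ⟨m, c, g, hsum⟩ := h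
  -- choose weights and semi-invariants
  have hg : ∀ i, ∃ μ : Fin n → ℤ, μ ∈ weightSet 𝒜 x ∧ intToRat μ = (g i : Fin n → ℚ) := by
    intro i
    obtain ⟨μ, hμ, hμ'⟩ := (g i).2
    exact ⟨μ, hμ, hμ'⟩
  choose μ hμw hμe using hg
  choose F hF hxF using fun i => hμw i
  -- clear denominators
  set N : ℕ := ∏ i : Fin m, ((c i : ℚ)).den with hN
  have hNpos : 0 < N := Finset.prod_pos fun i _ => (c i : ℚ).pos
  set M : Fin m → ℕ := fun i => ((c i : ℚ) * N).num.toNat with hM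
  have hMQ : ∀ i, ((M i : ℚ)) = (c i : ℚ) * N := by
    intro i
    obtain ⟨t, ht⟩ : ((c i : ℚ)).den ∣ N := Finset.dvd_prod_of_mem _ (Finset.mem_univ i)
    have hval : (c i : ℚ) * N = (((c i : ℚ).num * t : ℤ) : ℚ) := by
      have hq : (c i : ℚ) * ((c i : ℚ).den : ℚ) = ((c i : ℚ).num : ℚ) := Rat.mul_den_eq_num _
      rw [ht]
      push_cast
      rw [← mul_assoc, hq]
    have hnonneg : (0 : ℤ) ≤ (c i : ℚ).num * t := by
      have h1 : (0:ℚ) ≤ (c i : ℚ) * N := mul_nonneg (c i).2 (by positivity)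
      rw [hval] at h1
      exact_mod_cast h1
    have hMi : (M i : ℤ) = (c i : ℚ).num * t := by
      have : ((c i : ℚ) * N).num = (c i : ℚ).num * t := by
        rw [hval]; exact Rat.num_intCast _
      simp only [hM, this, Int.toNat_of_nonneg hnonneg]
    calc ((M i : ℚ)) = (((M i : ℤ) : ℚ)) := by push_cast; ring
      _ = (((c i : ℚ).num * t : ℤ) : ℚ) := by rw [hMi]
      _ = (c i : ℚ) * N := hval.symm
  -- the weight identity over ℤ
  have hweight : ∑ i : Fin m, M i • μ i = N • χ := by
    funext j
    have hQ : ∑ i : Fin m, (c i : ℚ) * (μ i j : ℚ) = (χ j : ℚ) := by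
      have := congrFun hsum j
      simp only [Finset.sum_apply, Pi.smul_apply, smul_eq_mul, intToRat] at this
      rw [← this]
      refine Finset.sum_congr rfl fun i _ => ?_
      rw [← hμe i]
      rfl
    have hQN : ∑ i : Fin m, (M i : ℚ) * (μ i j : ℚ) = (N : ℚ) * (χ j : ℚ) := by
      rw [← hQ, Finset.mul_sum]
      refine Finset.sum_congr rfl fun i _ => ?_
      rw [hMQ i]; ring
    have : ((∑ i : Fin m, M i • μ i) j : ℚ) = (((N • χ) j : ℤ) : ℚ) := by
      push_cast
      simpa using hQN
    exact_mod_cast this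
  -- construct the semi-invariant
  refine ⟨N, hNpos, ∏ i : Fin m, (F i) ^ (M i), ?_, ?_⟩
  · rw [← hweight]
    exact SetLike.prod_pow_mem_graded 𝒜 _ _ _ fun i _ => hF i
  · rw [map_prod]
    exact Finset.prod_ne_zero_iff.2 fun i _ => by
      rw [map_pow]; exact pow_ne_zero _ (hxF i)

theorem semistable_mono_of_gitCone_le
    {k A : Type*} [Field k] [CommRing A] [Algebra k A]
    {n : ℕ} (𝒜 : (Fin n → ℤ) → Submodule k A) [GradedAlgebra 𝒜]
    (χ₁ χ₂ : Fin n → ℤ) (hχ₁ : 𝒜 χ₁ ≠ ⊥) (hχ₂ : 𝒜 χ₂ ≠ ⊥)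
    (hcone : gitCone 𝒜 χ₂ ⊆ gitCone 𝒜 χ₁) :
    ∀ x : A →ₐ[k] k, IsSemistable 𝒜 χ₁ x → IsSemistable 𝒜 χ₂ x := by
  intro x hx
  have h1 : intToRat χ₁ ∈ orbitCone 𝒜 x := mem_orbitCone_of_isSemistable 𝒜 hx
  have h2 : intToRat χ₂ ∈ gitCone 𝒜 χ₂ := by
    refine Set.mem_iInter₂.2 fun y hy => hy
  have h3 : intToRat χ₂ ∈ gitCone 𝒜 χ₁ := hcone h2
  have h4 : intToRat χ₂ ∈ orbitCone 𝒜 x := Set.mem_iInter₂.1 h3 x h1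
  exact isSemistable_of_mem_orbitCone 𝒜 h4
end

section
/- Let X be an affine T-variety and χ ∈ Σ. Then a point x ∈ X is semistable with respect to χ (i.e. x ∈ X^{ss}_χ) if and only if χ lies in the orbit cone w_x. -/
theorem semistable_iff_mem_orbitCone
    {k A : Type*} [Field k] [CommRing A] [Algebra k A]
    {n : ℕ} (𝒜 : (Fin n → ℤ) → Submodule k A) [GradedAlgebra 𝒜]
    (χ : Fin n → ℤ) (hχ : 𝒜 χ ≠ ⊥) (x : A →ₐ[k] k) :
    IsSemistable 𝒜 χ x ↔ intToRat χ ∈ orbitCone 𝒜 x := by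
  constructor
  · rintro ⟨r, hr, f, hf, hxf⟩
    have hmem : intToRat (r • χ) ∈ orbitCone 𝒜 x :=
      Submodule.subset_span ⟨r • χ, ⟨f, hf, hxf⟩, rfl⟩
    have h := Submodule.smul_mem _ (⟨(r : ℚ)⁻¹, by positivity⟩ : {c : ℚ // 0 ≤ c}) hmem
    have heq : (⟨(r : ℚ)⁻¹, by positivity⟩ : {c : ℚ // 0 ≤ c}) • intToRat (r • χ)
        = intToRat χ := by
      funext j
      have hr' : (r : ℚ) ≠ 0 := by exact_mod_cast hr.ne'
      simp [intToRat, Pi.smul_apply, Submodule.smul_def]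
      field_simp
    rwa [heq] at h
  · intro hmem
    rw [orbitCone, Submodule.mem_span_set'] at hmem
    obtain ⟨m, c, v, hsum⟩ := hmem
    -- choose weights and semi-invariants
    have hv : ∀ i, ∃ χ' ∈ weightSet 𝒜 x, intToRat χ' = (v i : Fin n → ℚ) := by
      intro i; exact (v i).2
    choose χs hχs hvχ using hv
    choose fs hfs hxfs using hχs
    -- common denominator
    set N : ℕ := ∏ i : Fin m, ((c i : ℚ)).den with hN
    have hNpos : 0 < N := Finset.prod_pos fun i _ => (c i : ℚ).pos
    -- each N * c i is a nonnegative integer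
    have hsm : ∀ (s : {c : ℚ // 0 ≤ c}) (q : ℚ), s • q = (s : ℚ) * q := fun s q => rfl
    have hint : ∀ i : Fin m, ∃ a : ℕ, ((a : ℚ)) = (N : ℚ) * (c i : ℚ) := by
      intro i
      obtain ⟨d, hd⟩ : ((c i : ℚ).den : ℤ) ∣ (N : ℤ) := by
        exact_mod_cast Finset.dvd_prod_of_mem (fun i => ((c i : ℚ)).den)
          (Finset.mem_univ i)
      have h1 : ((c i : ℚ).den : ℚ) * (c i : ℚ) = ((c i : ℚ).num : ℚ) := by
        have hden : ((c i : ℚ).den : ℚ) ≠ 0 := by exact_mod_cast (c i : ℚ).den_nz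
        nth_rewrite 2 [← Rat.num_div_den (c i : ℚ)]
        field_simp
      have hq : (N : ℚ) * (c i : ℚ) = ((d * (c i : ℚ).num : ℤ) : ℚ) := by
        have : ((N : ℤ) : ℚ) = ((c i : ℚ).den : ℚ) * (d : ℚ) := by exact_mod_cast hd
        push_cast at this ⊢
        rw [this, mul_assoc, mul_comm (d : ℚ), ← mul_assoc, h1]; ring
      have hnn : (0 : ℤ) ≤ d * (c i : ℚ).num := by
        have : (0 : ℚ) ≤ ((d * (c i : ℚ).num : ℤ) : ℚ) := by
          rw [← hq]
          have := (c i).2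
          positivity
        exact_mod_cast this
      refine ⟨(d * (c i : ℚ).num).toNat, ?_⟩
      rw [hq]
      exact_mod_cast Int.toNat_of_nonneg hnn
    choose a ha using hint
    -- integral relation : N • χ = ∑ a i • χs i
    have hkey : N • χ = ∑ i : Fin m, a i • χs i := by
      funext j
      have hq : (N : ℚ) * (χ j : ℚ) = ∑ i : Fin m, (a i : ℚ) * ((χs i) j : ℚ) := by
        have hthis := congrFun hsum j
        simp only [Finset.sum_apply, Pi.smul_apply, hsm] at hthis
        calc (N : ℚ) * (χ j : ℚ) = (N : ℚ) * intToRat χ j := rfl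
          _ = (N : ℚ) * ∑ i : Fin m, (c i : ℚ) * (v i : Fin n → ℚ) j := by rw [← hthis]
          _ = ∑ i : Fin m, ((N : ℚ) * (c i : ℚ)) * (v i : Fin n → ℚ) j := by
              rw [Finset.mul_sum]; exact Finset.sum_congr rfl fun i _ => by ring
          _ = ∑ i : Fin m, (a i : ℚ) * ((χs i) j : ℚ) := by
              refine Finset.sum_congr rfl fun i _ => ?_
              rw [ha i, ← hvχ i]; rfl
      have : ((N • χ) j : ℚ) = (((∑ i : Fin m, a i • χs i) j : ℤ) : ℚ) := by
        push_cast [Finset.sum_apply]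
        simpa using hq
      exact_mod_cast this
    -- the semi-invariant
    refine ⟨N, hNpos, ∏ i : Fin m, fs i ^ a i, ?_, ?_⟩
    · have := SetLike.prod_pow_mem_graded 𝒜 χs fs (F := Finset.univ) a (fun i _ => hfs i)
      rwa [← hkey] at this
    · have hx : x (∏ i : Fin m, fs i ^ a i) = ∏ i : Fin m, x (fs i) ^ a i := by
        rw [map_prod]; exact Finset.prod_congr rfl fun i _ => map_pow x _ _
      rw [hx]
      exact Finset.prod_ne_zero_iff.2 fun i _ => pow_ne_zero _ (hxfs i)
end

section
/- Let T = k^× act on 𝔸³ by t·(x₁,x₂,x₃) = (tx₁, tx₂, t²x₃), with β : ℚ³ → ℚ the map β(a₁,a₂,a₃) = a₁ + a₂ + 2a₃ and σ^∨ = ℚ³_{≥0}. Then for the fiber polytopes P_χ = β^{-1}(χ) ∩ σ^∨ and their integral hulls P^I_χ = conv(β^{-1}(χ) ∩ ℤ³), one has P^I_2 = P_2 but P^I_3 ≠ P_3; concretely P_3 has the vertex (0, 0, 3/2) which is not a lattice point, and P^I_3 = conv{(3,0,0),(0,3,0),(1,0,1),(0,1,1)}. -/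
/-!
STATEMENT 19: Let `T = k^×` act on `𝔸³` by `t·(x₁,x₂,x₃) = (tx₁, tx₂, t²x₃)`, with
`β : ℚ³ → ℚ`, `β(a) = a₁ + a₂ + 2a₃` and `σ^∨ = ℚ³_{≥0}`.  For the fiber polytopes
`P_χ = β⁻¹(χ) ∩ σ^∨` and integral hulls `P^I_χ = conv(β⁻¹(χ) ∩ ℤ³)`, one has
`P^I_2 = P_2` but `P^I_3 ≠ P_3`; concretely `P_3` has the vertex `(0, 0, 3/2)`, which is
not a lattice point, and `P^I_3 = conv{(3,0,0), (0,3,0), (1,0,1), (0,1,1)}`.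
-/

/-- The fiber polytope `P_χ = β⁻¹(χ) ∩ ℚ³_{≥0}` for `β(a) = a₁ + a₂ + 2a₃`. -/
def fiberPolytope (χ : ℚ) : Set (Fin 3 → ℚ) :=
  {a | (∀ i, 0 ≤ a i) ∧ a 0 + a 1 + 2 * a 2 = χ}

/-- The integral hull `P^I_χ`: the convex hull of the lattice points of `P_χ`. -/
def integralHull (χ : ℚ) : Set (Fin 3 → ℚ) :=
  convexHull ℚ {a ∈ fiberPolytope χ | ∀ i, ∃ z : ℤ, a i = (z : ℚ)}

lemma convex_fiber (χ : ℚ) : Convex ℚ (fiberPolytope χ) := by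
  intro x hx y hy a b ha hb hab
  constructor
  · intro i
    have h1 := hx.1 i; have h2 := hy.1 i
    simp only [Pi.add_apply, Pi.smul_apply, smul_eq_mul]
    positivity
  · simp only [Pi.add_apply, Pi.smul_apply, smul_eq_mul]
    have h1 := hx.2; have h2 := hy.2
    linear_combination a * h1 + b * h2 + χ * hab

lemma pt_mem (p q r : ℤ) (χ : ℚ) (h0 : 0 ≤ p) (h1 : 0 ≤ q) (h2 : 0 ≤ r)
    (h : (p : ℚ) + q + 2 * r = χ) :
    (![(p : ℚ), q, r]) ∈ {a ∈ fiberPolytope χ | ∀ i, ∃ z : ℤ, a i = (z : ℚ)} := by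
  refine ⟨⟨fun i => ?_, by simpa using h⟩, fun i => ?_⟩
  · fin_cases i <;> simp <;> exact_mod_cast ‹_›
  · fin_cases i
    exacts [⟨p, by simp⟩, ⟨q, by simp⟩, ⟨r, by simp⟩]

lemma part1 : integralHull 2 = fiberPolytope 2 := by
  apply le_antisymm
  · exact convexHull_min (fun a ha => ha.1) (convex_fiber 2)
  · intro x hx
    have h := Finset.centerMass_mem_convexHull (Finset.univ : Finset (Fin 3))
      (w := ![x 0 / 2, x 1 / 2, x 2])
      (z := ![![2,0,0], ![0,2,0], ![0,0,1]])
      (fun i _ => by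
        have h0 := hx.1 0; have h1 := hx.1 1; have h2 := hx.1 2
        fin_cases i <;> simp <;> positivity)
      (by rw [Fin.sum_univ_three]; simp; have := hx.2; linarith)
      (s := {a ∈ fiberPolytope 2 | ∀ i, ∃ z : ℤ, a i = (z : ℚ)})
      (fun i _ => by
        have e1 : (![2,0,0] : Fin 3 → ℚ) = ![((2:ℤ):ℚ), ((0:ℤ):ℚ), ((0:ℤ):ℚ)] := by norm_num
        have e2 : (![0,2,0] : Fin 3 → ℚ) = ![((0:ℤ):ℚ), ((2:ℤ):ℚ), ((0:ℤ):ℚ)] := by norm_num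
        have e3 : (![0,0,1] : Fin 3 → ℚ) = ![((0:ℤ):ℚ), ((0:ℤ):ℚ), ((1:ℤ):ℚ)] := by norm_num
        fin_cases i
        · simpa [e1] using pt_mem 2 0 0 2 (by norm_num) (by norm_num) (by norm_num) (by norm_num)
        · simpa [e2] using pt_mem 0 2 0 2 (by norm_num) (by norm_num) (by norm_num) (by norm_num)
        · simpa [e3] using pt_mem 0 0 1 2 (by norm_num) (by norm_num) (by norm_num) (by norm_num))
    rw [Finset.centerMass_eq_of_sum_1] at h
    · convert h using 1
      · rfl
      funext i
      rw [Fin.sum_univ_three]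
      fin_cases i <;> simp <;> ring
    · rw [Fin.sum_univ_three]; simp; have := hx.2; linarith

lemma part2 : (![0, 0, 3/2] : Fin 3 → ℚ) ∈ Set.extremePoints ℚ (fiberPolytope 3) := by
  rw [mem_extremePoints]
  refine ⟨⟨fun i => by fin_cases i <;> norm_num, by simp; norm_num⟩, ?_⟩
  rintro y hy z hz ⟨a, b, ha, hb, hab, habx⟩
  have e0 : a * y 0 + b * z 0 = 0 := by
    have := congrFun habx 0; simpa using this
  have e1 : a * y 1 + b * z 1 = 0 := by
    have := congrFun habx 1; simpa using this
  have e2 : a * y 2 + b * z 2 = 3/2 := by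
    have := congrFun habx 2; simpa using this
  have hy0 := hy.1 0; have hy1 := hy.1 1; have hz0 := hz.1 0; have hz1 := hz.1 1
  have y0 : y 0 = 0 := by nlinarith
  have y1 : y 1 = 0 := by nlinarith
  have z0 : z 0 = 0 := by nlinarith
  have z1 : z 1 = 0 := by nlinarith
  have hy2 : y 2 = 3/2 := by have := hy.2; linarith
  have hz2 : z 2 = 3/2 := by have := hz.2; linarith
  constructor <;> (funext i; fin_cases i <;> simp [y0, y1, z0, z1, hy2, hz2])

lemma part4 : integralHull 3 = convexHull ℚ
    {![3, 0, 0], ![0, 3, 0], ![1, 0, 1], ![0, 1, 1]} := by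
  apply le_antisymm
  · apply convexHull_min _ (convex_convexHull ℚ _)
    rintro x ⟨⟨hpos, hsum⟩, hint⟩
    obtain ⟨z, hz⟩ := hint 2
    have hz0 : (0:ℤ) ≤ z := by
      have := hpos 2; rw [hz] at this; exact_mod_cast this
    have hz1 : z ≤ 1 := by
      have h0 := hpos 0; have h1 := hpos 1
      have : 2 * (z:ℚ) ≤ 3 := by rw [← hz]; linarith
      by_contra h
      push_neg at h
      have : (2:ℚ) ≤ (z:ℚ) := by exact_mod_cast h
      linarith
    interval_cases z
    · -- x 2 = 0 : segment from (3,0,0) to (0,3,0)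
      have hx2 : x 2 = 0 := by rw [hz]; norm_num
      have hsum' : x 0 + x 1 = 3 := by rw [hx2] at hsum; linarith
      apply segment_subset_convexHull (by simp) (by simp)
        (x := (![3,0,0] : Fin 3 → ℚ)) (y := ![0,3,0])
      refine ⟨x 0 / 3, x 1 / 3, div_nonneg (hpos 0) (by norm_num), div_nonneg (hpos 1) (by norm_num), by linarith, ?_⟩
      funext i
      fin_cases i <;> simp [hx2] <;> linarith
    · -- x 2 = 1 : segment from (1,0,1) to (0,1,1)
      have hx2 : x 2 = 1 := by rw [hz]; norm_num
      have hsum' : x 0 + x 1 = 1 := by rw [hx2] at hsum; linarith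
      apply segment_subset_convexHull (by simp) (by simp)
        (x := (![1,0,1] : Fin 3 → ℚ)) (y := ![0,1,1])
      refine ⟨x 0, x 1, hpos 0, hpos 1, by linarith, ?_⟩
      funext i
      fin_cases i <;> simp [hx2] <;> linarith
  · apply convexHull_mono
    intro v hv
    have e1 : (![3,0,0] : Fin 3 → ℚ) = ![((3:ℤ):ℚ), ((0:ℤ):ℚ), ((0:ℤ):ℚ)] := by norm_num
    have e2 : (![0,3,0] : Fin 3 → ℚ) = ![((0:ℤ):ℚ), ((3:ℤ):ℚ), ((0:ℤ):ℚ)] := by norm_num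
    have e3 : (![1,0,1] : Fin 3 → ℚ) = ![((1:ℤ):ℚ), ((0:ℤ):ℚ), ((1:ℤ):ℚ)] := by norm_num
    have e4 : (![0,1,1] : Fin 3 → ℚ) = ![((0:ℤ):ℚ), ((1:ℤ):ℚ), ((1:ℤ):ℚ)] := by norm_num
    rcases hv with rfl | rfl | rfl | rfl
    · simpa [e1] using pt_mem 3 0 0 3 (by norm_num) (by norm_num) (by norm_num) (by norm_num)
    · simpa [e2] using pt_mem 0 3 0 3 (by norm_num) (by norm_num) (by norm_num) (by norm_num)
    · simpa [e3] using pt_mem 1 0 1 3 (by norm_num) (by norm_num) (by norm_num) (by norm_num)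
    · simpa [e4] using pt_mem 0 1 1 3 (by norm_num) (by norm_num) (by norm_num) (by norm_num)

lemma part5 : integralHull 3 ≠ fiberPolytope 3 := by
  intro h
  have hmem : (![0, 0, 3/2] : Fin 3 → ℚ) ∈ fiberPolytope 3 :=
    ⟨fun i => by fin_cases i <;> norm_num, by simp; norm_num⟩
  rw [← h, part4] at hmem
  have hsub : convexHull ℚ ({![3, 0, 0], ![0, 3, 0], ![1, 0, 1], ![0, 1, 1]} :
      Set (Fin 3 → ℚ)) ⊆ {a | a 2 ≤ 1} := by
    apply convexHull_min
    · rintro v (rfl | rfl | rfl | rfl) <;> simp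
    · exact convex_halfSpace_le (LinearMap.proj (R := ℚ) (φ := fun _ : Fin 3 => ℚ) 2).isLinear 1
  have := hsub hmem
  simp at this
  norm_num at this

lemma part3 : ¬ (∀ i, ∃ z : ℤ, (![0, 0, 3/2] : Fin 3 → ℚ) i = (z : ℚ)) := by
  intro h
  rcases h 2 with ⟨z, hz⟩
  simp at hz
  have h2 : (2 : ℚ) * z = 3 := by rw [← hz]; norm_num
  have : (2 : ℤ) * z = 3 := by exact_mod_cast h2
  omega

theorem fiber_polytopes_of_weights_1_1_2 :
    -- `χ = 2` is integer: `P^I_2 = P_2`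
    integralHull 2 = fiberPolytope 2 ∧
    -- `(0, 0, 3/2)` is a vertex (extreme point) of `P_3` …
    (![0, 0, 3/2] : Fin 3 → ℚ) ∈ Set.extremePoints ℚ (fiberPolytope 3) ∧
    -- … which is not a lattice point
    ¬ (∀ i, ∃ z : ℤ, (![0, 0, 3/2] : Fin 3 → ℚ) i = (z : ℚ)) ∧
    -- `P^I_3` is the convex hull of the four indicated lattice points
    integralHull 3 = convexHull ℚ
      {![3, 0, 0], ![0, 3, 0], ![1, 0, 1], ![0, 1, 1]} ∧
    -- in particular `χ = 3` is not integer
    integralHull 3 ≠ fiberPolytope 3 := by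
  exact ⟨part1, part2, part3, part4, part5⟩
end
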